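/- Let S be an irreducible numerical semigroup with Frobenius number F and let x be a minimal generator of S with F/2 < x < F, 2x - F ∉ S, 3x ≠ 2F, 4x ≠ 3F, and F - x less than the multiplicity of S. Then (S \ {x}) ∪ {F - x} is an irreducible numerical semigroup with Frobenius number F. -/

import Mathlib

/-- A numerical semigroup: a cofinite additive submonoid of ℕ. -/
def IsNumericalSemigroup (S : Set ℕ) : Prop :=
  0 ∈ S ∧ (∀ a ∈ S, ∀ b ∈ S, a + b ∈ S) ∧ Sᶜ.Finite

/-- `F` is the Frobenius number of `S`: the largest natural number not in `S`. -/
def IsFrobenius (S : Set ℕ) (F : ℕ) : Prop :=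
  F ∉ S ∧ ∀ n : ℕ, n ∉ S → n ≤ F

/-- The set of pseudo-Frobenius numbers of `S`. -/
def PF (S : Set ℕ) : Set ℕ :=
  {x | x ∉ S ∧ ∀ s ∈ S, s ≠ 0 → x + s ∈ S}

/-- The genus of `S`: the number of gaps. -/
noncomputable def genus (S : Set ℕ) : ℕ := Sᶜ.ncard

/-- The type of `S`: the number of pseudo-Frobenius numbers. -/
noncomputable def typ (S : Set ℕ) : ℕ := (PF S).ncard

/-- The gaps of the second type: gaps `x` such that `F - x` is also a gap. -/
def Lset (S : Set ℕ) (F : ℕ) : Set ℕ := {x | x ∉ S ∧ F - x ∉ S}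

/-- `S` is symmetric with Frobenius number `F`: for every integer `x`,
exactly one of `x ∈ S`, `F - x ∈ S` holds (expressed over `ℕ`). -/
def IsSymmetric (S : Set ℕ) (F : ℕ) : Prop :=
  ∀ x : ℕ, x ≤ F → (x ∈ S ↔ F - x ∉ S)

/-- `S` is pseudo-symmetric with Frobenius number `F`. -/
def IsPseudoSymmetric (S : Set ℕ) (F : ℕ) : Prop :=
  Even F ∧ ∀ x : ℕ, x ≤ F → 2 * x ≠ F → (x ∈ S ↔ F - x ∉ S)

/-- `S` is irreducible: it is not the intersection of two numerical semigroups
properly containing it. -/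
def IsIrreducibleNS (S : Set ℕ) : Prop :=
  IsNumericalSemigroup S ∧
    ¬ ∃ S₁ S₂ : Set ℕ, IsNumericalSemigroup S₁ ∧ IsNumericalSemigroup S₂ ∧
      S ⊂ S₁ ∧ S ⊂ S₂ ∧ S = S₁ ∩ S₂

/-- `x` is a minimal generator of `S`: a nonzero element of `S` that is not a
sum of two nonzero elements of `S`. -/
def IsMinGen (S : Set ℕ) (x : ℕ) : Prop :=
  x ∈ S ∧ x ≠ 0 ∧ ¬ ∃ a ∈ S, ∃ b ∈ S, a ≠ 0 ∧ b ≠ 0 ∧ x = a + b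

/-- `m` is the multiplicity of `S`: its least positive element. -/
def IsMultiplicity (S : Set ℕ) (m : ℕ) : Prop :=
  m ∈ S ∧ m ≠ 0 ∧ ∀ s ∈ S, s ≠ 0 → m ≤ s

/-!
An irreducible numerical semigroup `S` with Frobenius number `F` is characterised by
`y ∉ S → 2 * y ≠ F → F - y ∈ S` (symmetric or pseudo-symmetric). One direction: a
largest gap `h` violating this satisfies `h + s ∈ S` for `s ∈ S \ {0}` and `2 * h ∈ S`, so
`S ∪ {h}` is a numerical semigroup without `F`, against maximality. Conversely, any proper
oversemigroup of such an `S` contains `F`, so `S` is not an intersection of two of them.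

Removing the minimal generator `x` keeps a numerical semigroup, and `F - x` can be added back:
`2 * (F - x)` is the reflection of the gap `2 * x - F`, and for `0 < s < x` the element
`F - x + s` is the reflection of `x - s`, which is not in `S` as `x` is a minimal generator.
The characterisation then transfers from `S` to `(S \ {x}) ∪ {F - x}`.
-/

lemma IsFrobenius.mem_of_lt {S : Set ℕ} {F n : ℕ} (hF : IsFrobenius S F) (h : F < n) :
    n ∈ S := by
  by_contra hn
  exact absurd (hF.2 n hn) (by omega)

lemma IsNumericalSemigroup.union_Ici {S : Set ℕ} (hS : IsNumericalSemigroup S) (n : ℕ) :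
    IsNumericalSemigroup (S ∪ Set.Ici n) := by
  refine ⟨Or.inl hS.1, ?_, hS.2.2.subset (Set.compl_subset_compl.mpr Set.subset_union_left)⟩
  rintro a (ha | ha) b (hb | hb)
  · exact Or.inl (hS.2.1 a ha b hb)
  all_goals
    right
    simp only [Set.mem_Ici] at *
    omega

lemma IsNumericalSemigroup.insert_of_add_mem {S : Set ℕ} {h : ℕ} (hS : IsNumericalSemigroup S)
    (hadd : ∀ s ∈ S, s ≠ 0 → h + s ∈ S) (h2 : 2 * h ∈ S) :
    IsNumericalSemigroup (insert h S) := by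
  refine ⟨Set.mem_insert_of_mem h hS.1, ?_,
    hS.2.2.subset (Set.compl_subset_compl.mpr (Set.subset_insert h S))⟩
  have hadd' : ∀ s ∈ S, h + s ∈ insert h S := fun s hs => by
    rcases eq_or_ne s 0 with rfl | hs0
    · simp
    · exact Set.mem_insert_of_mem h (hadd s hs hs0)
  rintro a (rfl | ha) b (rfl | hb)
  · exact Set.mem_insert_of_mem _ (by rwa [two_mul] at h2)
  · exact hadd' b hb
  · rw [add_comm]
    exact hadd' a ha
  · exact Set.mem_insert_of_mem _ (hS.2.1 a ha b hb)

lemma IsMinGen.add_ne {S : Set ℕ} {x a b : ℕ} (hx : IsMinGen S x) (ha : a ∈ S) (hb : b ∈ S)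
    (hax : a ≠ x) (hbx : b ≠ x) : a + b ≠ x := by
  intro hab
  rcases eq_or_ne a 0 with rfl | ha0
  · exact hbx (by omega)
  rcases eq_or_ne b 0 with rfl | hb0
  · exact hax (by omega)
  exact hx.2.2 ⟨a, ha, b, hb, ha0, hb0, hab.symm⟩

lemma IsNumericalSemigroup.diff_singleton {S : Set ℕ} {x : ℕ} (hS : IsNumericalSemigroup S)
    (hx : IsMinGen S x) : IsNumericalSemigroup (S \ {x}) := by
  refine ⟨⟨hS.1, hx.2.1.symm⟩,
    fun a ha b hb => ⟨hS.2.1 a ha.1 b hb.1, hx.add_ne ha.1 hb.1 ha.2 hb.2⟩,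
    (hS.2.2.union (Set.finite_singleton x)).subset ?_⟩
  intro n hn
  by_cases hnx : n = x
  · exact Or.inr hnx
  · exact Or.inl fun hnS => hn ⟨hnS, hnx⟩

lemma IsIrreducibleNS.eq_of_subset {S T : Set ℕ} {F : ℕ} (hirr : IsIrreducibleNS S)
    (hF : IsFrobenius S F) (hT : IsNumericalSemigroup T) (hST : S ⊆ T) (hFT : F ∉ T) :
    T = S := by
  by_contra hne
  refine hirr.2 ⟨T, S ∪ Set.Ici F, hT, hirr.1.union_Ici F, hST.ssubset_of_ne (Ne.symm hne),
    Set.ssubset_iff_subset_ne.mpr ⟨Set.subset_union_left, fun h => hF.1 ?_⟩, ?_⟩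
  · rw [h]
    exact Or.inr Set.self_mem_Ici
  ext n
  refine ⟨fun hn => ⟨hST hn, Or.inl hn⟩, ?_⟩
  rintro ⟨hnT, hn | hn⟩
  · exact hn
  · rcases (Set.mem_Ici.mp hn).eq_or_lt with rfl | hlt
    · exact absurd hnT hFT
    · exact hF.mem_of_lt hlt

section LargestUnreflectedGap

variable {S : Set ℕ} {F h : ℕ}

lemma sub_mem_of_gt_largest_unreflected (hF : IsFrobenius S F) (hh : h ∉ S) (hFh : F - h ∉ S)
    (hmax : ∀ y, h < y → y ∉ S → F - y ∉ S → 2 * y = F) {y : ℕ} (hhy : h < y)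
    (hy : y ∉ S) : F - y ∈ S := by
  by_contra hFy
  have hy2 := hmax y hhy hy hFy
  have hhF := hF.2 h hh
  -- `F - h` would be a larger unreflected gap, with `2 * (F - h) ≠ F`
  have := hmax (F - h) (by omega) hFh (by rwa [Nat.sub_sub_self hhF])
  omega

lemma add_mem_of_largest_unreflected (hS : IsNumericalSemigroup S) (hF : IsFrobenius S F)
    (hh : h ∉ S) (hFh : F - h ∉ S)
    (hmax : ∀ y, h < y → y ∉ S → F - y ∉ S → 2 * y = F) {s : ℕ} (hs : s ∈ S)
    (hs0 : s ≠ 0) : h + s ∈ S := by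
  by_contra hhs
  have hle := hF.2 _ hhs
  have := hS.2.1 _ (sub_mem_of_gt_largest_unreflected hF hh hFh hmax (by omega) hhs) s hs
  exact hFh (by rwa [show F - (h + s) + s = F - h by omega] at this)

lemma two_mul_mem_of_largest_unreflected (hS : IsNumericalSemigroup S) (hF : IsFrobenius S F)
    (hh : h ∉ S) (hFh : F - h ∉ S) (hh2 : 2 * h ≠ F)
    (hmax : ∀ y, h < y → y ∉ S → F - y ∉ S → 2 * y = F) : 2 * h ∈ S := by
  by_contra h2h
  have hh0 : h ≠ 0 := by
    rintro rfl
    exact hh hS.1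
  have hle := hF.2 _ h2h
  have := add_mem_of_largest_unreflected hS hF hh hFh hmax
    (sub_mem_of_gt_largest_unreflected hF hh hFh hmax (by omega) h2h) (by omega)
  exact hFh (by rwa [show h + (F - 2 * h) = F - h by omega] at this)

end LargestUnreflectedGap

lemma IsIrreducibleNS.sub_mem_of_not_mem {S : Set ℕ} {F y : ℕ} (hirr : IsIrreducibleNS S)
    (hF : IsFrobenius S F) (hy : y ∉ S) (hy2 : 2 * y ≠ F) : F - y ∈ S := by
  by_contra hFy
  obtain ⟨h, ⟨hh, hFh, hh2⟩, hmax⟩ :=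
    Set.exists_max_image {y | y ∉ S ∧ F - y ∉ S ∧ 2 * y ≠ F} id
      (hirr.1.2.2.subset fun y hy => hy.1) ⟨y, hy, hFy, hy2⟩
  have hmax' : ∀ z, h < z → z ∉ S → F - z ∉ S → 2 * z = F := fun z hz hzS hFz =>
    by_contra fun h2z => absurd (hmax z ⟨hzS, hFz, h2z⟩) (by simpa using hz)
  have hins := hirr.1.insert_of_add_mem
    (fun _ => add_mem_of_largest_unreflected hirr.1 hF hh hFh hmax')
    (two_mul_mem_of_largest_unreflected hirr.1 hF hh hFh hh2 hmax')
  have hFins : F ∉ insert h S := by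
    rintro (rfl | hFS)
    · exact hFh (by simpa using hirr.1.1)
    · exact hF.1 hFS
  exact hh (hirr.eq_of_subset hF hins (Set.subset_insert h S) hFins ▸ Set.mem_insert h S)

lemma frobenius_mem_of_ssubset {T T' : Set ℕ} {F : ℕ} (hF : IsFrobenius T F)
    (hsym : ∀ y, y ∉ T → 2 * y ≠ F → F - y ∈ T) (hT' : IsNumericalSemigroup T')
    (hss : T ⊂ T') : F ∈ T' := by
  obtain ⟨t, htT', htT⟩ := Set.exists_of_ssubset hss
  have htF := hF.2 t htT
  by_cases h2t : 2 * t = F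
  · simpa [← h2t, two_mul] using hT'.2.1 t htT' t htT'
  · simpa [Nat.add_sub_cancel' htF] using hT'.2.1 t htT' _ (hss.1 (hsym t htT h2t))

lemma IsIrreducibleNS.of_sub_mem {T : Set ℕ} {F : ℕ} (hT : IsNumericalSemigroup T)
    (hF : IsFrobenius T F) (hsym : ∀ y, y ∉ T → 2 * y ≠ F → F - y ∈ T) :
    IsIrreducibleNS T :=
  ⟨hT, fun ⟨_, _, h₁, h₂, hs₁, hs₂, heq⟩ =>
    hF.1 (heq ▸ ⟨frobenius_mem_of_ssubset hF hsym h₁ hs₁,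
      frobenius_mem_of_ssubset hF hsym h₂ hs₂⟩)⟩

section ReplaceGenerator

variable {S : Set ℕ} {F x : ℕ}

lemma two_mul_sub_mem (hirr : IsIrreducibleNS S) (hF : IsFrobenius S F) (h1 : F < 2 * x)
    (h3 : 2 * x - F ∉ S) (h5 : 4 * x ≠ 3 * F) : 2 * (F - x) ∈ S := by
  have := hirr.sub_mem_of_not_mem hF h3 (by omega)
  rwa [show F - (2 * x - F) = 2 * (F - x) by omega] at this

lemma sub_add_mem_diff (hirr : IsIrreducibleNS S) (hF : IsFrobenius S F) (hx : IsMinGen S x)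
    (h2 : x < F) (h3 : 2 * x - F ∉ S) {s : ℕ} (hs : s ∈ S \ {x}) (hs0 : s ≠ 0) :
    F - x + s ∈ S \ {x} := by
  have hsx : s ≠ x := hs.2
  have hs2 : s ≠ 2 * x - F := fun h => h3 (h ▸ hs.1)
  have hss : s + s ≠ 2 * x - F := fun h => h3 (h ▸ hirr.1.2.1 s hs.1 s hs.1)
  refine ⟨?_, (by omega : F - x + s ≠ x)⟩
  rcases lt_or_gt_of_ne hsx with hlt | hgt
  · by_contra hmem
    have hsub := hirr.sub_mem_of_not_mem hF hmem (by omega)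
    rw [show F - (F - x + s) = x - s by omega] at hsub
    exact hx.add_ne hsub hs.1 (by omega) hsx (by omega)
  · exact hF.mem_of_lt (by omega)

lemma isFrobenius_insert_sub (hF : IsFrobenius S F) (hx : IsMinGen S x) (h2 : x < F) :
    IsFrobenius (insert (F - x) (S \ {x})) F := by
  refine ⟨?_, fun n hn => ?_⟩
  · rintro (h | ⟨hFS, -⟩)
    · exact hx.2.1 (by omega)
    · exact hF.1 hFS
  · by_contra hnF
    exact hn (Set.mem_insert_of_mem _ ⟨hF.mem_of_lt (by omega), (by omega : n ≠ x)⟩)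

lemma sub_mem_insert_sub (hirr : IsIrreducibleNS S) (hF : IsFrobenius S F) {y : ℕ}
    (hy : y ∉ insert (F - x) (S \ {x})) (hy2 : 2 * y ≠ F) :
    F - y ∈ insert (F - x) (S \ {x}) := by
  simp only [Set.mem_insert_iff, Set.mem_sdiff, Set.mem_singleton_iff, not_or, not_and_or,
    not_not] at hy
  obtain ⟨hyx', hyS | rfl⟩ := hy
  · have hyF := hF.2 y hyS
    exact Set.mem_insert_of_mem _ ⟨hirr.sub_mem_of_not_mem hF hyS hy2, (by omega : F - y ≠ x)⟩
  · exact Set.mem_insert _ _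

end ReplaceGenerator

theorem stmt12_general (S : Set ℕ) (F x : ℕ)
    (hirr : IsIrreducibleNS S) (hF : IsFrobenius S F)
    (hx : IsMinGen S x)
    (h1 : F < 2 * x) (h2 : x < F) (h3 : 2 * x - F ∉ S)
    (h4 : 3 * x ≠ 2 * F) (h5 : 4 * x ≠ 3 * F) :
    IsIrreducibleNS ((S \ {x}) ∪ {F - x}) ∧ IsFrobenius ((S \ {x}) ∪ {F - x}) F := by
  rw [Set.union_singleton]
  have hT : IsNumericalSemigroup (insert (F - x) (S \ {x})) :=
    (hirr.1.diff_singleton hx).insert_of_add_mem (fun _ => sub_add_mem_diff hirr hF hx h2 h3)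
      ⟨two_mul_sub_mem hirr hF h1 h3 h5, (by omega : 2 * (F - x) ≠ x)⟩
  have hTF := isFrobenius_insert_sub hF hx h2
  exact ⟨.of_sub_mem hT hTF fun _ => sub_mem_insert_sub hirr hF, hTF⟩

theorem stmt12 (S : Set ℕ) (F x m : ℕ)
    (hirr : IsIrreducibleNS S) (hF : IsFrobenius S F)
    (hm : IsMultiplicity S m) (hx : IsMinGen S x)
    (h1 : F < 2 * x) (h2 : x < F) (h3 : 2 * x - F ∉ S)
    (h4 : 3 * x ≠ 2 * F) (h5 : 4 * x ≠ 3 * F) (h6 : F - x < m) :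
    IsIrreducibleNS ((S \ {x}) ∪ {F - x}) ∧ IsFrobenius ((S \ {x}) ∪ {F - x}) F :=
  stmt12_general S F x hirr hF hx h1 h2 h3 h4 h5
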